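/- arXiv:1712.08840 — 4 statements merged into one kernel-verified Lean document; each statement's English description precedes it below -/
import Mathlib

section
/- For every integer l ≥ 1 there exists a constant C_l > 0 such that for every integer r ≥ 1 and every finite sequence a_1, …, a_r of nonnegative real numbers one has (∑_{i=1}^r a_i)^l ≤ C_l · ( ∑_{1 ≤ i_1 < i_2 < ⋯ < i_l ≤ r} a_{i_1} a_{i_2} ⋯ a_{i_l} + (max_{1 ≤ i ≤ r} a_i)^l ). -/
/-! With `S = ∑ aᵢ`, `M = max aᵢ` and `e_l` the `l`-th elementary symmetric sum, induction on
`l` gives `(S - l M)₊ ^ l ≤ l! e_l(a)`: multiplying by `S = ∑ aᵢ` and using `S - aᵢ ≥ S - M`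
reduces the step to the identity `∑ᵢ aᵢ e_l(a without aᵢ) = (l + 1) e_{l+1}(a)`.
If `S > 2 l M` then `S - l M > S / 2`, so `S ^ l ≤ 2 ^ l l! e_l(a)`; otherwise
`S ^ l ≤ (2 l) ^ l M ^ l`. -/

open Finset
open scoped Nat

theorem sum_mul_sum_powersetCard_erase {ι R : Type*} [DecidableEq ι] [CommSemiring R]
    (s : Finset ι) (a : ι → R) (l : ℕ) :
    ∑ i ∈ s, a i * ∑ t ∈ (s.erase i).powersetCard l, ∏ j ∈ t, a j
      = (l + 1) * ∑ u ∈ s.powersetCard (l + 1), ∏ j ∈ u, a j := by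
  calc ∑ i ∈ s, a i * ∑ t ∈ (s.erase i).powersetCard l, ∏ j ∈ t, a j
      = ∑ i ∈ s, ∑ u ∈ (s.powersetCard (l + 1)).filter (i ∈ ·), ∏ j ∈ u, a j := by
        refine sum_congr rfl fun i hi => ?_
        rw [mul_sum]
        refine sum_nbij' (insert i) (·.erase i) ?_ ?_ ?_ ?_ fun t ht => by
          rw [prod_insert fun h => notMem_erase i s ((mem_powersetCard.1 ht).1 h)]
        all_goals
          intro t ht
          simp only [mem_filter, mem_powersetCard] at ht ⊢
          grind
    _ = ∑ u ∈ s.powersetCard (l + 1), ∑ _i ∈ u, ∏ j ∈ u, a j :=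
        sum_comm' fun i u => by
          simp only [mem_filter, mem_powersetCard]
          constructor
          · rintro ⟨-, ⟨hus, hcard⟩, hiu⟩; exact ⟨hiu, hus, hcard⟩
          · rintro ⟨hiu, hus, hcard⟩; exact ⟨hus hiu, ⟨hus, hcard⟩, hiu⟩
    _ = (l + 1) * ∑ u ∈ s.powersetCard (l + 1), ∏ j ∈ u, a j := by
        rw [mul_sum]
        refine sum_congr rfl fun u hu => ?_
        rw [sum_const, (mem_powersetCard.1 hu).2, nsmul_eq_mul]
        push_cast; ring

theorem max_sum_sub_pow_le_factorial_mul_sum_powersetCard {ι : Type*}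
    (a : ι → ℝ) {M : ℝ} (hM : 0 ≤ M) (l : ℕ) (s : Finset ι)
    (ha : ∀ i ∈ s, 0 ≤ a i) (haM : ∀ i ∈ s, a i ≤ M) :
    max (∑ i ∈ s, a i - l * M) 0 ^ l ≤ l ! * ∑ t ∈ s.powersetCard l, ∏ i ∈ t, a i := by
  classical
  induction l generalizing s with
  | zero => simp
  | succ l ih =>
    have hS : 0 ≤ ∑ i ∈ s, a i := sum_nonneg ha
    have hfirst : max (∑ i ∈ s, a i - (l + 1 : ℕ) * M) 0 ≤ ∑ i ∈ s, a i :=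
      max_le (sub_le_self _ (by positivity)) hS
    have herase : ∀ i ∈ s, max (∑ j ∈ s, a j - (l + 1 : ℕ) * M) 0 ^ l
        ≤ l ! * ∑ t ∈ (s.erase i).powersetCard l, ∏ j ∈ t, a j := fun i hi => by
      refine le_trans ?_ (ih (s.erase i) (fun j hj => ha j (mem_of_mem_erase hj))
        fun j hj => haM j (mem_of_mem_erase hj))
      gcongr max ?_ _ ^ _
      rw [sum_erase_eq_sub hi]
      push_cast
      linarith [haM i hi]
    calc max (∑ i ∈ s, a i - (l + 1 : ℕ) * M) 0 ^ (l + 1)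
        ≤ (∑ i ∈ s, a i) * max (∑ i ∈ s, a i - (l + 1 : ℕ) * M) 0 ^ l := by
          rw [pow_succ']; gcongr
      _ ≤ ∑ i ∈ s, a i * (l ! * ∑ t ∈ (s.erase i).powersetCard l, ∏ j ∈ t, a j) := by
          rw [sum_mul]
          exact sum_le_sum fun i hi => mul_le_mul_of_nonneg_left (herase i hi) (ha i hi)
      _ = (l + 1)! * ∑ t ∈ s.powersetCard (l + 1), ∏ i ∈ t, a i := by
          simp_rw [mul_left_comm (a _), ← mul_sum, sum_mul_sum_powersetCard_erase,
            Nat.factorial_succ]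
          push_cast; ring

theorem sum_pow_le_pow_add_sum_powersetCard {ι : Type*}
    (a : ι → ℝ) {M : ℝ} (hM : 0 ≤ M) (l : ℕ) (s : Finset ι)
    (ha : ∀ i ∈ s, 0 ≤ a i) (haM : ∀ i ∈ s, a i ≤ M) :
    (∑ i ∈ s, a i) ^ l ≤
      (2 * l * M) ^ l + 2 ^ l * l ! * ∑ t ∈ s.powersetCard l, ∏ i ∈ t, a i := by
  have hS : 0 ≤ ∑ i ∈ s, a i := sum_nonneg ha
  have he : 0 ≤ ∑ t ∈ s.powersetCard l, ∏ i ∈ t, a i :=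
    sum_nonneg fun t ht => prod_nonneg fun i hi => ha i ((mem_powersetCard.1 ht).1 hi)
  by_cases hsmall : ∑ i ∈ s, a i ≤ 2 * l * M
  · calc (∑ i ∈ s, a i) ^ l ≤ (2 * l * M) ^ l := by gcongr
      _ ≤ _ := le_add_of_nonneg_right (by positivity)
  · have hhalf : (∑ i ∈ s, a i) / 2 ≤ max (∑ i ∈ s, a i - l * M) 0 :=
      le_max_of_le_left (by linarith)
    calc (∑ i ∈ s, a i) ^ l = 2 ^ l * ((∑ i ∈ s, a i) / 2) ^ l := by
          rw [← mul_pow, mul_div_cancel₀ _ two_ne_zero]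
      _ ≤ 2 ^ l * (l ! * ∑ t ∈ s.powersetCard l, ∏ i ∈ t, a i) := by
          gcongr
          exact (pow_le_pow_left₀ (by positivity) hhalf l).trans
            (max_sum_sub_pow_le_factorial_mul_sum_powersetCard a hM l s ha haM)
      _ ≤ _ := by rw [← mul_assoc]; exact le_add_of_nonneg_left (by positivity)

theorem statement0_general (l : ℕ) :
    ∃ C : ℝ, 0 < C ∧ ∀ (r : ℕ) (hr : 1 ≤ r) (a : Fin r → ℝ), (∀ i, 0 ≤ a i) →
      (∑ i, a i) ^ l ≤
        C * ((∑ s ∈ Finset.powersetCard l (Finset.univ : Finset (Fin r)), ∏ i ∈ s, a i) +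
          ((Finset.univ : Finset (Fin r)).sup' ⟨⟨0, hr⟩, Finset.mem_univ _⟩ a) ^ l) := by
  refine ⟨(2 * l) ^ l + 2 ^ l * l !, by positivity, fun r hr a ha => ?_⟩
  set M := univ.sup' ⟨⟨0, hr⟩, mem_univ _⟩ a
  have haM : ∀ i, a i ≤ M := fun i => le_sup' a (mem_univ i)
  have hM : 0 ≤ M := (ha _).trans (haM ⟨0, hr⟩)
  have he : 0 ≤ ∑ t ∈ powersetCard l univ, ∏ i ∈ t, a i :=
    sum_nonneg fun t _ => prod_nonneg fun i _ => ha i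
  calc (∑ i, a i) ^ l
      ≤ (2 * l * M) ^ l + 2 ^ l * l ! * ∑ t ∈ powersetCard l univ, ∏ i ∈ t, a i :=
        sum_pow_le_pow_add_sum_powersetCard a hM l univ (fun i _ => ha i) fun i _ => haM i
    _ ≤ _ := by
        rw [mul_pow]
        linarith [mul_nonneg (by positivity : (0 : ℝ) ≤ (2 * l) ^ l) he,
          mul_nonneg (by positivity : (0 : ℝ) ≤ 2 ^ l * l !) (pow_nonneg hM l)]

/-- For every integer `l ≥ 1` there exists `C_l > 0` such that for every `r ≥ 1`
and every finite sequence `a_1, …, a_r` of nonnegative reals,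
`(∑ a_i)^l ≤ C_l * (∑_{i_1 < ⋯ < i_l} a_{i_1} ⋯ a_{i_l} + (max_i a_i)^l)`. -/
theorem statement0 (l : ℕ) (hl : 1 ≤ l) :
    ∃ C : ℝ, 0 < C ∧ ∀ (r : ℕ) (hr : 1 ≤ r) (a : Fin r → ℝ), (∀ i, 0 ≤ a i) →
      (∑ i, a i) ^ l ≤
        C * ((∑ s ∈ Finset.powersetCard l (Finset.univ : Finset (Fin r)), ∏ i ∈ s, a i) +
          ((Finset.univ : Finset (Fin r)).sup' ⟨⟨0, hr⟩, Finset.mem_univ _⟩ a) ^ l) :=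
  statement0_general l
end

section
/- There is an absolute constant C > 0 such that for every real M ≥ 2, ∑_{1 ≤ m_1, m_2, m_3 ≤ M} 1/lcm(m_1, m_2, m_3) ≤ C (log M)^7, where the sum is over all triples of positive integers m_1, m_2, m_3 at most M. -/
/-!
Splitting `m₁, m₂, m₃` into seven "Venn" parts (the common part `gcd(m₁, m₂, m₃)`,
the three parts shared by exactly two of them, and the three private parts) writes every triple
injectively as the image of a 7-tuple of integers in `[1, M]` whose product is
`lcm(m₁, m₂, m₃)`. Hence the sum is at most `(∑_{d ≤ M} 1/d)^7 ≤ (1 + log M)^7`.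
-/

open Finset

theorem Nat.gcd_mul_gcd_eq_gcd_gcd_mul_gcd_lcm {x y z : ℕ} (hx : x ≠ 0) (hy : y ≠ 0)
    (hz : z ≠ 0) : x.gcd y * x.gcd z = x.gcd (y.gcd z) * x.gcd (y.lcm z) := by
  apply Nat.eq_of_factorization_eq (by positivity) (by positivity)
  intro p
  simp only [Nat.factorization_mul (Nat.gcd_ne_zero_left hx) (Nat.gcd_ne_zero_left hx),
    Nat.factorization_gcd hx hy, Nat.factorization_gcd hx hz,
    Nat.factorization_gcd hx (Nat.gcd_ne_zero_left hy), Nat.factorization_gcd hy hz,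
    Nat.factorization_gcd hx (Nat.lcm_ne_zero hy hz), Nat.factorization_lcm hy hz,
    Finsupp.add_apply, Finsupp.inf_apply, Finsupp.sup_apply]
  omega

theorem Nat.gcd_lcm_eq_mul_of_gcd_eq_mul {x y z e f g : ℕ} (hx : x ≠ 0) (hy : y ≠ 0)
    (hz : z ≠ 0) (he : x.gcd (y.gcd z) = e) (hf : x.gcd y = e * f) (hg : x.gcd z = e * g) :
    x.gcd (y.lcm z) = e * f * g := by
  have he₀ : 0 < e := he ▸ Nat.gcd_pos_of_pos_left _ (Nat.pos_of_ne_zero hx)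
  refine Nat.eq_of_mul_eq_mul_left he₀ ?_
  rw [← he, ← Nat.gcd_mul_gcd_eq_gcd_gcd_mul_gcd_lcm hx hy hz, hf, hg, he]
  ring

theorem Nat.lcm_lcm_mul_gcd_lcm_mul_gcd (x y z : ℕ) :
    (x.lcm y).lcm z * x.gcd (y.lcm z) * y.gcd z = x * y * z := by
  rw [Nat.lcm_assoc, mul_comm _ (x.gcd _), Nat.gcd_mul_lcm, mul_assoc, mul_comm (y.lcm z),
    Nat.gcd_mul_lcm, mul_assoc]

theorem Finset.sum_le_sum_of_exists_preimage {α β R : Type*} [AddCommMonoid R] [PartialOrder R]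
    [IsOrderedAddMonoid R] {s : Finset α} {t : Finset β} {f : α → R} {g : β → R} (φ : β → α)
    (hg : ∀ y ∈ t, 0 ≤ g y) (h : ∀ x ∈ s, ∃ y ∈ t, φ y = x ∧ f x ≤ g y) :
    ∑ x ∈ s, f x ≤ ∑ y ∈ t, g y := by
  classical
  rcases s.eq_empty_or_nonempty with rfl | ⟨x₀, hx₀⟩
  · simpa using sum_nonneg hg
  obtain ⟨y₀, -⟩ := h x₀ hx₀
  have : Nonempty β := ⟨y₀⟩
  choose! ψ hψt hφψ hfg using h
  have hψ : Set.InjOn ψ s := fun x hx y hy hxy => by rw [← hφψ x hx, ← hφψ y hy, hxy]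
  calc ∑ x ∈ s, f x ≤ ∑ x ∈ s, g (ψ x) := sum_le_sum hfg
    _ = ∑ y ∈ s.image ψ, g y := (sum_image hψ).symm
    _ ≤ ∑ y ∈ t, g y :=
      sum_le_sum_of_subset_of_nonneg (image_subset_iff.2 hψt) fun y hy _ => hg y hy

/-- `t 0` is the part of `(m₁, m₂, m₃)` common to all three numbers, `t 1`, `t 2`, `t 3` the parts
shared exactly by the pairs `{1, 2}`, `{1, 3}`, `{2, 3}`, and `t 4`, `t 5`, `t 6` the parts private
to `m₁`, `m₂`, `m₃`. -/
def vennTriple (t : Fin 7 → ℕ) : ℕ × ℕ × ℕ :=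
  (t 0 * t 1 * t 2 * t 4, t 0 * t 1 * t 3 * t 5, t 0 * t 2 * t 3 * t 6)

theorem exists_vennTriple_eq_and_prod_eq_lcm {m₁ m₂ m₃ : ℕ} (h₁ : m₁ ≠ 0) (h₂ : m₂ ≠ 0)
    (h₃ : m₃ ≠ 0) :
    ∃ t : Fin 7 → ℕ, vennTriple t = (m₁, m₂, m₃) ∧ ∏ i, t i = (m₁.lcm m₂).lcm m₃ := by
  obtain ⟨e, he⟩ : ∃ e, m₁.gcd (m₂.gcd m₃) = e := ⟨_, rfl⟩
  obtain ⟨f₁₂, hf₁₂⟩ : e ∣ m₁.gcd m₂ := he ▸ Nat.gcd_dvd_gcd_of_dvd_right _ (Nat.gcd_dvd_left _ _)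
  obtain ⟨f₁₃, hf₁₃⟩ : e ∣ m₁.gcd m₃ := he ▸ Nat.gcd_dvd_gcd_of_dvd_right _ (Nat.gcd_dvd_right _ _)
  obtain ⟨f₂₃, hf₂₃⟩ : e ∣ m₂.gcd m₃ := he ▸ Nat.gcd_dvd_right _ _
  have hG₁ := Nat.gcd_lcm_eq_mul_of_gcd_eq_mul h₁ h₂ h₃ he hf₁₂ hf₁₃
  have hG₂ := Nat.gcd_lcm_eq_mul_of_gcd_eq_mul (e := e) h₂ h₁ h₃ (by rw [Nat.gcd_left_comm, he])
    (by rw [Nat.gcd_comm, hf₁₂]) hf₂₃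
  have hG₃ := Nat.gcd_lcm_eq_mul_of_gcd_eq_mul (e := e) h₃ h₁ h₂
    (by rw [Nat.gcd_comm, Nat.gcd_assoc, he]) (by rw [Nat.gcd_comm, hf₁₃])
    (by rw [Nat.gcd_comm, hf₂₃])
  obtain ⟨a, ha⟩ : e * f₁₂ * f₁₃ ∣ m₁ := hG₁ ▸ Nat.gcd_dvd_left _ _
  obtain ⟨b, hb⟩ : e * f₁₂ * f₂₃ ∣ m₂ := hG₂ ▸ Nat.gcd_dvd_left _ _
  obtain ⟨c, hc⟩ : e * f₁₃ * f₂₃ ∣ m₃ := hG₃ ▸ Nat.gcd_dvd_left _ _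
  refine ⟨![e, f₁₂, f₁₃, f₂₃, a, b, c], by simp [vennTriple, ha, hb, hc], ?_⟩
  have hpos : 0 < e * f₁₂ * f₁₃ * (e * f₂₃) := by
    rw [← hG₁, ← hf₂₃]
    exact Nat.mul_pos (Nat.gcd_pos_of_pos_left _ (Nat.pos_of_ne_zero h₁))
      (Nat.gcd_pos_of_pos_left _ (Nat.pos_of_ne_zero h₂))
  apply Nat.eq_of_mul_eq_mul_right hpos
  calc (∏ i, ![e, f₁₂, f₁₃, f₂₃, a, b, c] i) * (e * f₁₂ * f₁₃ * (e * f₂₃))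
      = (e * f₁₂ * f₁₃ * a) * (e * f₁₂ * f₂₃ * b) * (e * f₁₃ * f₂₃ * c) := by
        simp only [Fin.prod_univ_seven, Matrix.cons_val]; ring
    _ = (m₁.lcm m₂).lcm m₃ * (e * f₁₂ * f₁₃ * (e * f₂₃)) := by
        rw [← ha, ← hb, ← hc, ← Nat.lcm_lcm_mul_gcd_lcm_mul_gcd, hG₁, hf₂₃, mul_assoc]

theorem dvd_vennTriple (t : Fin 7 → ℕ) (i : Fin 7) :
    t i ∣ (vennTriple t).1 ∨ t i ∣ (vennTriple t).2.1 ∨ t i ∣ (vennTriple t).2.2 := by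
  fin_cases i <;> simp only [vennTriple, Fin.zero_eta, Fin.mk_one, Fin.reduceFinMk] <;>
    solve_by_elim [Or.inl, Or.inr, dvd_mul_of_dvd_left, dvd_mul_left, dvd_mul_right]

theorem mem_Icc_of_dvd_of_mem_Icc {d m N : ℕ} (hd : d ∣ m) (hm : m ∈ Icc 1 N) : d ∈ Icc 1 N := by
  rw [mem_Icc] at hm ⊢
  have := Nat.le_of_dvd hm.1 hd
  exact ⟨Nat.pos_of_dvd_of_pos hd hm.1, by omega⟩

theorem exists_mem_piFinset_vennTriple_eq {N : ℕ} {m : ℕ × ℕ × ℕ}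
    (hm : m ∈ Icc 1 N ×ˢ Icc 1 N ×ˢ Icc 1 N) :
    ∃ t ∈ Fintype.piFinset fun _ : Fin 7 => Icc 1 N,
      vennTriple t = m ∧ ∏ i, t i = (m.1.lcm m.2.1).lcm m.2.2 := by
  simp only [mem_product] at hm
  obtain ⟨h₁, h₂, h₃⟩ := hm
  obtain ⟨t, ht, hprod⟩ := exists_vennTriple_eq_and_prod_eq_lcm
    (Nat.pos_iff_ne_zero.1 (mem_Icc.1 h₁).1) (Nat.pos_iff_ne_zero.1 (mem_Icc.1 h₂).1)
    (Nat.pos_iff_ne_zero.1 (mem_Icc.1 h₃).1)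
  refine ⟨t, Fintype.mem_piFinset.2 fun i => ?_, ht, hprod⟩
  rcases dvd_vennTriple t i with h | h | h <;> rw [ht] at h
  exacts [mem_Icc_of_dvd_of_mem_Icc h h₁, mem_Icc_of_dvd_of_mem_Icc h h₂,
    mem_Icc_of_dvd_of_mem_Icc h h₃]

theorem sum_one_div_lcm_le_harmonic_pow (N : ℕ) :
    ∑ m₁ ∈ Icc 1 N, ∑ m₂ ∈ Icc 1 N, ∑ m₃ ∈ Icc 1 N, (1 : ℝ) / ((m₁.lcm m₂).lcm m₃ : ℕ) ≤
      (∑ d ∈ Icc 1 N, (d : ℝ)⁻¹) ^ 7 := by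
  rw [sum_pow']
  simp only [← sum_product']
  refine sum_le_sum_of_exists_preimage vennTriple (fun t _ => by positivity) fun m hm => ?_
  obtain ⟨t, ht, rfl, hprod⟩ := exists_mem_piFinset_vennTriple_eq hm
  refine ⟨t, ht, rfl, ?_⟩
  rw [hprod.symm, Nat.cast_prod, one_div, prod_inv_distrib]

theorem sum_Icc_inv_floor_le_three_mul_log {M : ℝ} (hM : 2 ≤ M) :
    ∑ d ∈ Icc 1 ⌊M⌋₊, (d : ℝ)⁻¹ ≤ 3 * Real.log M := by
  have hlog2 := Real.log_two_gt_d9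
  have hlogM : Real.log 2 ≤ Real.log M := Real.log_le_log (by norm_num) hM
  have hlogN : Real.log ⌊M⌋₊ ≤ Real.log M :=
    Real.log_le_log (by exact_mod_cast Nat.floor_pos.2 (by linarith)) (Nat.floor_le (by linarith))
  have := harmonic_le_one_add_log ⌊M⌋₊
  simp only [harmonic_eq_sum_Icc, Rat.cast_sum, Rat.cast_inv, Rat.cast_natCast] at this
  linarith

/-- There is an absolute constant `C > 0` such that for every real `M ≥ 2`,
`∑_{1 ≤ m₁, m₂, m₃ ≤ M} 1 / lcm(m₁, m₂, m₃) ≤ C (log M)^7`. -/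
theorem statement1 : ∃ C : ℝ, 0 < C ∧ ∀ M : ℝ, 2 ≤ M →
    ∑ m₁ ∈ Finset.Icc 1 ⌊M⌋₊, ∑ m₂ ∈ Finset.Icc 1 ⌊M⌋₊, ∑ m₃ ∈ Finset.Icc 1 ⌊M⌋₊,
      (1 : ℝ) / (Nat.lcm (Nat.lcm m₁ m₂) m₃ : ℝ) ≤ C * Real.log M ^ 7 := by
  refine ⟨3 ^ 7, by norm_num, fun M hM => ?_⟩
  calc _ ≤ (∑ d ∈ Icc 1 ⌊M⌋₊, (d : ℝ)⁻¹) ^ 7 := sum_one_div_lcm_le_harmonic_pow _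
    _ ≤ (3 * Real.log M) ^ 7 := by gcongr; exact sum_Icc_inv_floor_le_three_mul_log hM
    _ = 3 ^ 7 * Real.log M ^ 7 := mul_pow _ _ _
end

section
/- Let k ≥ 2 be an integer and ε' ∈ (0,1). There exist C = C(k, ε') and X_0 = X_0(k, ε') such that for all X ≥ X_0 one has ∑_{n ≤ 4X} 𝑑̃_k(n)^3 ≤ C · X (log X)^{3(1+ε')k log k + 7}. -/
open Finset

/-- `dk k n` is the `k`-fold divisor function `d_k(n)`: the number of `k`-tuples of
positive integers with product `n` (for `n ≥ 1`); `dk 0 n = 1_{n = 1}`. -/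
def dk : ℕ → ℕ → ℕ
  | 0, n => if n = 1 then 1 else 0
  | k + 1, n => ∑ d ∈ n.divisors, dk k d

/-- `bigOmega n = Ω(n)`, the number of prime factors of `n` counted with multiplicity. -/
def bigOmega (n : ℕ) : ℕ := (Nat.primeFactorsList n).length

/-- `Mval k X = M := X^(2k / log log X)`. -/
noncomputable def Mval (k : ℕ) (X : ℝ) : ℝ := X ^ ((2 * (k : ℝ)) / Real.log (Real.log X))

/-- The modified divisor function
`𝑑̃_k(n) := 1_{(X, 2X]}(n) · ∑_{m ∣ n, m ≤ M, Ω(m) ≤ (1+ε')k log log X} d_{k−1}(m)`. -/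
noncomputable def dtilde (k : ℕ) (ε' : ℝ) (X : ℝ) (n : ℕ) : ℝ :=
  (if X < (n : ℝ) ∧ (n : ℝ) ≤ 2 * X then 1 else 0) *
    ∑ m ∈ n.divisors.filter (fun m : ℕ => ((m : ℝ) ≤ Mval k X) ∧
        (bigOmega m : ℝ) ≤ (1 + ε') * k * Real.log (Real.log X)), (dk (k - 1) m : ℝ)

/-! Each term of `𝑑̃_k(n)` satisfies
`d_{k-1}(m) ≤ k^{Ω(m)} ≤ k^{(1+ε')k log log X} = (log X)^{(1+ε')k log k}`,
and there are at most `τ(n)` terms. Comparing `(a+1)^3 ≤ C(a+7, 7)` at prime powers gives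
`τ(n)^3 ≤ d_8(n)`, and writing `d_{j+2} = ζ * d_{j+1}` gives `∑_{n ≤ N} d_{j+1}(n) ≤ N (1 + log N)^j`
by induction on `j`, using `∑_{a ≤ N} 1/a ≤ 1 + log N`. With `N = ⌊4X⌋` and `1 + log N ≤ 3 log X`
this is the claimed bound. -/

open ArithmeticFunction
open scoped ArithmeticFunction.zeta ArithmeticFunction.Omega

lemma dk_eq_zeta_pow (j n : ℕ) : dk j n = (ζ ^ j) n := by
  induction j generalizing n with
  | zero => simp [dk, one_apply]
  | succ j ih => simp only [dk, pow_succ', zeta_mul_apply, ih]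

lemma zeta_pow_succ_apply_prime_pow (j a : ℕ) {p : ℕ} (hp : p.Prime) :
    (ζ ^ (j + 1)) (p ^ a) = (a + j).choose j := by
  induction j generalizing a with
  | zero => simp [hp.ne_zero]
  | succ j ih =>
    rw [pow_succ', zeta_mul_apply, Nat.sum_divisors_prime_pow hp]
    simp only [ih, Nat.sum_range_add_choose, add_assoc]

lemma zeta_pow_succ_apply (j : ℕ) {n : ℕ} (hn : n ≠ 0) :
    (ζ ^ (j + 1)) n = n.factorization.prod fun _ a => (a + j).choose j := by
  rw [isMultiplicative_zeta.pow.multiplicative_factorization _ hn]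
  exact Finsupp.prod_congr fun p hp =>
    zeta_pow_succ_apply_prime_pow j _ (Nat.prime_of_mem_primeFactors hp)

lemma zeta_pow_succ_apply_le_pow_cardFactors (j : ℕ) {n : ℕ} (hn : n ≠ 0) :
    (ζ ^ (j + 1)) n ≤ (j + 1) ^ Ω n := by
  rw [zeta_pow_succ_apply j hn, cardFactors_eq_sum_factorization, Finsupp.prod, Finsupp.sum,
    ← prod_pow_eq_pow_sum]
  gcongr with p
  rw [add_comm, Nat.choose_symm_add]
  exact Nat.choose_add_le_add_one_pow _ _

lemma add_one_pow_three_le_choose (a : ℕ) : (a + 1) ^ 3 ≤ (a + 7).choose 7 := by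
  induction a with
  | zero => simp
  | succ a ih =>
    have pascal : (a + 7).choose 7 * (a + 8) = (a + 8).choose 7 * (a + 1) :=
      Nat.choose_mul_succ_eq (a + 7) 7
    refine Nat.le_of_mul_le_mul_right (?_ : _ ≤ _ * (a + 1)) a.succ_pos
    calc (a + 1 + 1) ^ 3 * (a + 1) ≤ (a + 1) ^ 3 * (a + 8) := by ring_nf; nlinarith
      _ ≤ (a + 7).choose 7 * (a + 8) := by gcongr
      _ = _ := pascal

lemma card_divisors_pow_three_le_zeta_pow_eight {n : ℕ} (hn : n ≠ 0) :
    #n.divisors ^ 3 ≤ (ζ ^ 8) n := by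
  rw [Nat.card_divisors hn, zeta_pow_succ_apply 7 hn, Finsupp.prod, Nat.support_factorization,
    ← prod_pow]
  gcongr
  exact add_one_pow_three_le_choose _

lemma sum_Ioc_zeta_pow_succ_le (j N : ℕ) :
    ∑ n ∈ Ioc 0 N, ((ζ ^ (j + 1)) n : ℝ) ≤ N * (1 + Real.log N) ^ j := by
  induction j generalizing N with
  | zero => simp only [zero_add, pow_one, pow_zero, mul_one]; exact_mod_cast (sum_Ioc_zeta N).le
  | succ j ih =>
    have inner (n : ℕ) : (∑ m ∈ Ioc 0 (N / n), ((ζ ^ (j + 1)) m : ℝ))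
        ≤ (N / n : ℝ) * (1 + Real.log N) ^ j := by
      refine (ih (N / n)).trans ?_
      rcases (N / n).eq_zero_or_pos with h | h
      · rw [h, Nat.cast_zero, zero_mul]
        have hlogN := Real.log_natCast_nonneg N
        positivity
      · have hdiv : ((N / n : ℕ) : ℝ) ≤ N := by exact_mod_cast N.div_le_self n
        gcongr
        exact Nat.cast_div_le
    calc ∑ n ∈ Ioc 0 N, ((ζ ^ (j + 1 + 1)) n : ℝ)
        = ∑ n ∈ Ioc 0 N, ∑ m ∈ Ioc 0 (N / n), ((ζ ^ (j + 1)) m : ℝ) := by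
          rw [pow_succ', ← Nat.cast_sum, sum_Ioc_mul_eq_sum_sum, Nat.cast_sum]
          refine sum_congr rfl fun n hn => ?_
          rw [zeta_apply_ne (mem_Ioc.1 hn).1.ne', one_mul, Nat.cast_sum]
      _ ≤ ∑ n ∈ Ioc 0 N, (N / n : ℝ) * (1 + Real.log N) ^ j := sum_le_sum fun n _ => inner n
      _ = N * (1 + Real.log N) ^ j * harmonic N := by
          rw [harmonic_eq_sum_Icc, ← Icc_add_one_left_eq_Ioc, zero_add]
          push_cast [mul_sum]
          exact sum_congr rfl fun n _ => by ring
      _ ≤ N * (1 + Real.log N) ^ (j + 1) := by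
          rw [pow_succ, ← mul_assoc]
          gcongr
          exact harmonic_le_one_add_log N

lemma dk_pred_le_rpow {k : ℕ} (hk : 2 ≤ k) {m : ℕ} (hm : m ≠ 0) {t : ℝ}
    (ht : (bigOmega m : ℝ) ≤ t) : (dk (k - 1) m : ℝ) ≤ (k : ℝ) ^ t := by
  obtain ⟨j, rfl⟩ := Nat.exists_eq_add_of_le' hk
  rw [show bigOmega m = Ω m from cardFactors_apply.symm] at ht
  calc (dk (j + 2 - 1) m : ℝ) = (ζ ^ (j + 1)) m := by rw [dk_eq_zeta_pow]; rfl
    _ ≤ ((j + 1 : ℕ) : ℝ) ^ Ω m := by exact_mod_cast zeta_pow_succ_apply_le_pow_cardFactors j hm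
    _ ≤ ((j + 2 : ℕ) : ℝ) ^ Ω m := by gcongr; omega
    _ = ((j + 2 : ℕ) : ℝ) ^ (Ω m : ℝ) := (Real.rpow_natCast _ _).symm
    _ ≤ ((j + 2 : ℕ) : ℝ) ^ t := Real.rpow_le_rpow_of_exponent_le (by norm_cast; omega) ht

lemma dtilde_nonneg (k : ℕ) (ε' X : ℝ) (n : ℕ) : 0 ≤ dtilde k ε' X n := by
  unfold dtilde
  positivity

lemma dtilde_le {k : ℕ} (hk : 2 ≤ k) (ε' X : ℝ) (n : ℕ) :
    dtilde k ε' X n ≤ #n.divisors * (k : ℝ) ^ ((1 + ε') * k * Real.log (Real.log X)) := by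
  set B := (k : ℝ) ^ ((1 + ε') * k * Real.log (Real.log X))
  set S := n.divisors.filter fun m : ℕ => ((m : ℝ) ≤ Mval k X) ∧
    (bigOmega m : ℝ) ≤ (1 + ε') * k * Real.log (Real.log X)
  have hsum : ∑ m ∈ S, (dk (k - 1) m : ℝ) ≤ #S * B := by
    rw [← nsmul_eq_mul]
    refine sum_le_card_nsmul S _ B fun m hm => ?_
    obtain ⟨hmn, -, hΩ⟩ := mem_filter.1 hm
    exact dk_pred_le_rpow hk (Nat.ne_of_gt (Nat.pos_of_mem_divisors hmn)) hΩ
  have hS : (#S : ℝ) ≤ #n.divisors := by exact_mod_cast card_filter_le _ _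
  calc dtilde k ε' X n ≤ 1 * ∑ m ∈ S, (dk (k - 1) m : ℝ) := by
        unfold dtilde
        gcongr
        split_ifs <;> norm_num
    _ ≤ #n.divisors * B := by
        rw [one_mul]
        exact hsum.trans (by gcongr)

lemma sum_dtilde_pow_three_le {k : ℕ} (hk : 2 ≤ k) (ε' X : ℝ) (N : ℕ) :
    ∑ n ∈ Icc 1 N, dtilde k ε' X n ^ 3 ≤
      ((k : ℝ) ^ ((1 + ε') * k * Real.log (Real.log X))) ^ 3 * (N * (1 + Real.log N) ^ 7) := by
  set B := (k : ℝ) ^ ((1 + ε') * k * Real.log (Real.log X))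
  calc ∑ n ∈ Icc 1 N, dtilde k ε' X n ^ 3
      ≤ ∑ n ∈ Ioc 0 N, B ^ 3 * ((ζ ^ 8) n : ℝ) := by
        rw [← Icc_add_one_left_eq_Ioc, zero_add]
        refine sum_le_sum fun n hn => ?_
        have hn0 : n ≠ 0 := Nat.one_le_iff_ne_zero.1 (mem_Icc.1 hn).1
        calc dtilde k ε' X n ^ 3 ≤ (#n.divisors * B) ^ 3 := by
              gcongr
              · exact dtilde_nonneg k ε' X n
              · exact dtilde_le hk ε' X n
          _ ≤ B ^ 3 * ((ζ ^ 8) n : ℝ) := by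
              rw [mul_pow, mul_comm]
              gcongr
              exact_mod_cast card_divisors_pow_three_le_zeta_pow_eight hn0
    _ ≤ B ^ 3 * (N * (1 + Real.log N) ^ 7) := by
        rw [← mul_sum]
        gcongr
        exact sum_Ioc_zeta_pow_succ_le 7 N

lemma rpow_mul_log_comm {a b : ℝ} (ha : 0 < a) (hb : 0 < b) (c : ℝ) :
    a ^ (c * Real.log b) = b ^ (c * Real.log a) := by
  rw [Real.rpow_def_of_pos ha, Real.rpow_def_of_pos hb]
  ring_nf

lemma one_add_log_floor_four_mul_le {X : ℝ} (hX : 4 ≤ X) (hlogX : 1 ≤ Real.log X) :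
    1 + Real.log ⌊4 * X⌋₊ ≤ 3 * Real.log X := by
  have hlog4 : Real.log 4 ≤ Real.log X := Real.log_le_log (by norm_num) hX
  have hlogN : Real.log ⌊4 * X⌋₊ ≤ Real.log (4 * X) := by
    rcases (⌊4 * X⌋₊).eq_zero_or_pos with h | h
    · rw [h, Nat.cast_zero, Real.log_zero]; exact Real.log_nonneg (by linarith)
    · exact Real.log_le_log (by exact_mod_cast h) (Nat.floor_le (by linarith))
  rw [Real.log_mul (by norm_num) (by linarith)] at hlogN
  linarith

theorem statement2_general (k : ℕ) (hk : 2 ≤ k) (ε' : ℝ) :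
    ∃ C : ℝ, 0 < C ∧ ∃ X₀ : ℝ, ∀ X : ℝ, X₀ ≤ X →
      ∑ n ∈ Finset.Icc 1 ⌊4 * X⌋₊, dtilde k ε' X n ^ 3 ≤
        C * X * Real.log X ^ (3 * (1 + ε') * k * Real.log k + 7) := by
  refine ⟨4 * 3 ^ 7, by norm_num, 16, fun X hX => ?_⟩
  have hlogX : 1 ≤ Real.log X := by
    rw [Real.le_log_iff_exp_le (by linarith)]
    linarith [Real.exp_one_lt_d9]
  have hB : (k : ℝ) ^ ((1 + ε') * k * Real.log (Real.log X)) =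
      Real.log X ^ ((1 + ε') * k * Real.log k) :=
    rpow_mul_log_comm (by norm_cast; omega) (by linarith) _
  calc ∑ n ∈ Icc 1 ⌊4 * X⌋₊, dtilde k ε' X n ^ 3
      ≤ ((k : ℝ) ^ ((1 + ε') * k * Real.log (Real.log X))) ^ 3 *
          (⌊4 * X⌋₊ * (1 + Real.log ⌊4 * X⌋₊) ^ 7) :=
        sum_dtilde_pow_three_le hk ε' X _
    _ ≤ (Real.log X ^ ((1 + ε') * k * Real.log k)) ^ 3 * (4 * X * (3 * Real.log X) ^ 7) := by
        rw [hB]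
        gcongr
        · exact Nat.floor_le (by linarith)
        · exact one_add_log_floor_four_mul_le (by linarith) hlogX
    _ = 4 * 3 ^ 7 * X * Real.log X ^ (3 * (1 + ε') * k * Real.log k + 7) := by
        rw [Real.rpow_add (by linarith), ← Real.rpow_mul_natCast (by linarith)]
        norm_num
        ring_nf

/-- For `k ≥ 2`, `ε' ∈ (0,1)` there are `C, X₀` such that for all `X ≥ X₀`,
`∑_{n ≤ 4X} 𝑑̃_k(n)^3 ≤ C · X (log X)^{3(1+ε')k log k + 7}`. -/
theorem statement2 (k : ℕ) (hk : 2 ≤ k) (ε' : ℝ) (hε : ε' ∈ Set.Ioo (0 : ℝ) 1) :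
    ∃ C : ℝ, 0 < C ∧ ∃ X₀ : ℝ, ∀ X : ℝ, X₀ ≤ X →
      ∑ n ∈ Finset.Icc 1 ⌊4 * X⌋₊, dtilde k ε' X n ^ 3 ≤
        C * X * Real.log X ^ (3 * (1 + ε') * k * Real.log k + 7) :=
  statement2_general k hk ε'
end

section
/- There is an absolute constant C > 0 such that for every integer N ≥ 1 and every real Q ≥ N^{10}, one has (1/Q) ∑_{n ∈ ℤ, |n| ≤ Q} ( #{ q : 1 ≤ q ≤ N, q ∣ n } )^{10} ≤ C N^{3/4}. -/
/-!
Expanding the tenth power, `#{q ≤ N : q ∣ n}^10` counts the tuples `g ∈ [1, N]^10` with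
`lcm g ∣ n`. Swapping the sums, a tuple is counted for at most `(2Q + 1) / lcm g + 1` values of
`n`, so the average is at most `3 ∑_g 1 / lcm g + N^10 / Q`. Grouping the tuples by
`L = lcm g ≤ N^10`, at most `d(L)^10` of them have lcm `L`, and the divisor bound
`d(L) ≪ L^(3/400)` leaves `∑_{L ≤ N^10} L^(3/40 - 1) ≪ N^(3/4)`.
-/

open Finset

lemma add_one_le_div_sub_one_mul_pow {t : ℝ} (ht : 1 < t) (e : ℕ) :
    (e + 1 : ℝ) ≤ t / (t - 1) * t ^ e := by
  have hbern : 1 + e * (t - 1) ≤ t ^ e := by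
    simpa using one_add_mul_le_pow (a := t - 1) (by linarith) e
  have ht1 : 0 < t - 1 := by linarith
  calc (e + 1 : ℝ) ≤ t / (t - 1) * (1 + e * (t - 1)) := by
        rw [div_mul_eq_mul_div, le_div_iff₀ ht1]
        nlinarith [mul_nonneg (Nat.cast_nonneg (α := ℝ) e) (sq_nonneg (t - 1))]
    _ ≤ t / (t - 1) * t ^ e := by gcongr

lemma add_one_le_rpow_pow_of_two_le {p ε : ℝ} (hp : 2 ≤ p) (hε : 0 < ε) (e : ℕ) :
    (e + 1 : ℝ) ≤ (if 2 ≤ p ^ ε then 1 else 2 ^ ε / (2 ^ ε - 1)) * (p ^ ε) ^ e := by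
  split_ifs with hbig
  · calc (e + 1 : ℝ) ≤ 2 ^ e := by exact_mod_cast Nat.lt_two_pow_self
      _ ≤ (p ^ ε) ^ e := by gcongr
      _ = 1 * (p ^ ε) ^ e := (one_mul _).symm
  · calc (e + 1 : ℝ) ≤ 2 ^ ε / (2 ^ ε - 1) * (2 ^ ε) ^ e :=
          add_one_le_div_sub_one_mul_pow (Real.one_lt_rpow one_lt_two hε) e
      _ ≤ 2 ^ ε / (2 ^ ε - 1) * (p ^ ε) ^ e := by
          have : (1 : ℝ) < 2 ^ ε := Real.one_lt_rpow one_lt_two hε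
          gcongr

theorem Nat.exists_card_divisors_le_mul_rpow {ε : ℝ} (hε : 0 < ε) :
    ∃ C : ℝ, ∀ n : ℕ, n ≠ 0 → (#n.divisors : ℝ) ≤ C * (n : ℝ) ^ ε := by
  set c : ℝ := 2 ^ ε / (2 ^ ε - 1)
  have hc : 1 ≤ c := by
    have : (1 : ℝ) < 2 ^ ε := Real.one_lt_rpow one_lt_two hε
    rw [le_div_iff₀ (by linarith)]; linarith
  refine ⟨c ^ ⌈(2 : ℝ) ^ ε⁻¹⌉₊, fun n hn => ?_⟩
  -- Only the primes with `p ^ ε < 2`, all below `2 ^ ε⁻¹`, contribute a factor `c > 1`.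
  set w : ℕ → ℝ := fun p => if 2 ≤ (p : ℝ) ^ ε then 1 else c
  have hsmall : #{p ∈ n.primeFactors | ¬ 2 ≤ ((p : ℕ) : ℝ) ^ ε} ≤ ⌈(2 : ℝ) ^ ε⁻¹⌉₊ := by
    refine (card_le_card fun p hp => ?_).trans (card_range _).le
    simp only [mem_filter, not_le] at hp
    rw [mem_range, Nat.lt_ceil, Real.lt_rpow_inv_iff_of_pos (by positivity) zero_le_two hε]
    exact hp.2
  have hw : ∏ p ∈ n.primeFactors, w p ≤ c ^ ⌈(2 : ℝ) ^ ε⁻¹⌉₊ := by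
    rw [prod_ite, prod_const_one, one_mul, prod_const]
    exact pow_le_pow_right₀ hc hsmall
  have hn_rpow : (n : ℝ) ^ ε = ∏ p ∈ n.primeFactors, ((p : ℝ) ^ ε) ^ n.factorization p := by
    conv_lhs => rw [← Nat.prod_factorization_pow_eq_self hn]
    rw [Nat.prod_factorization_eq_prod_primeFactors, Nat.cast_prod,
      ← Real.finsetProd_rpow _ _ fun p _ => by positivity]
    refine prod_congr rfl fun p _ => ?_
    rw [Nat.cast_pow, ← Real.rpow_natCast, ← Real.rpow_natCast, ← Real.rpow_mul (by positivity),
      ← Real.rpow_mul (by positivity), mul_comm]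
  calc (#n.divisors : ℝ) = ∏ p ∈ n.primeFactors, ((n.factorization p : ℝ) + 1) := by
        rw [Nat.card_divisors hn]; push_cast; rfl
    _ ≤ ∏ p ∈ n.primeFactors, w p * ((p : ℝ) ^ ε) ^ n.factorization p :=
        prod_le_prod (fun _ _ => by positivity) fun p hp =>
          add_one_le_rpow_pow_of_two_le
            (by exact_mod_cast (Nat.prime_of_mem_primeFactors hp).two_le) hε _
    _ = (∏ p ∈ n.primeFactors, w p) * (n : ℝ) ^ ε := by rw [prod_mul_distrib, hn_rpow]
    _ ≤ c ^ ⌈(2 : ℝ) ^ ε⁻¹⌉₊ * (n : ℝ) ^ ε := by gcongr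

theorem sum_Icc_rpow_sub_one_le {s : ℝ} (hs0 : 0 < s) (hs1 : s ≤ 1) (X : ℕ) :
    ∑ L ∈ Icc 1 X, (L : ℝ) ^ (s - 1) ≤ (X : ℝ) ^ s / s := by
  induction X with
  | zero => simp [Real.zero_rpow hs0.ne']
  | succ X ih =>
    rw [sum_Icc_succ_top (Nat.le_add_left 1 X)]
    set y : ℝ := ((X + 1 : ℕ) : ℝ)
    have hy : 1 ≤ y := by simp [y]
    -- Bernoulli: `X^s = y^s (1 - 1/y)^s ≤ y^s (1 - s/y)`.
    have hX : (X : ℝ) ^ s ≤ y ^ s * (1 - s / y) := by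
      have hXy : (X : ℝ) = y * (1 + -y⁻¹) := by
        field_simp; simp [y]
      rw [hXy, Real.mul_rpow (by positivity) (by simp; exact inv_le_one_of_one_le₀ hy)]
      gcongr
      calc (1 + -y⁻¹) ^ s ≤ 1 + s * -y⁻¹ :=
            rpow_one_add_le_one_add_mul_self (by simp; exact inv_le_one_of_one_le₀ hy)
              hs0.le hs1
        _ = 1 - s / y := by ring
    have hy_sub : y ^ (s - 1) = y ^ s / y := by
      rw [Real.rpow_sub (by positivity), Real.rpow_one]
    rw [hy_sub]
    calc ∑ L ∈ Icc 1 X, (L : ℝ) ^ (s - 1) + y ^ s / y ≤ (X : ℝ) ^ s / s + y ^ s / y := by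
          gcongr
      _ ≤ y ^ s * (1 - s / y) / s + y ^ s / y := by gcongr
      _ = y ^ s / s := by field_simp; ring

theorem Int.card_filter_dvd_Icc_le {r : ℤ} (hr : 0 < r) {a b : ℤ} (hab : a ≤ b) :
    (#{x ∈ Icc a b | r ∣ x} : ℝ) ≤ (b - a + 1) / r + 1 := by
  suffices h : (#{x ∈ Icc a b | r ∣ x} : ℚ) ≤ (b - a + 1) / r + 1 by exact_mod_cast h
  have hr' : (0 : ℚ) < r := by exact_mod_cast hr
  have hb := Int.floor_le ((b : ℚ) / r)
  have ha := Int.sub_one_lt_floor (((a : ℚ) - 1) / r)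
  have hsplit : ((b - a + 1 : ℚ)) / r = b / r - (a - 1) / r := by ring
  have hnonneg : (0 : ℚ) ≤ (b - a + 1) / r :=
    div_nonneg (by linarith [(Int.cast_le (R := ℚ)).2 hab]) hr'.le
  rw [← Int.cast_natCast, ← Finset.Ioc_sub_one_left_eq_Icc, Int.Ioc_filter_dvd_card _ _ hr,
    Int.cast_max, max_le_iff]
  push_cast
  constructor <;> linarith

theorem card_filter_dvd_pow (S : Finset ℕ) (k : ℕ) (n : ℤ) :
    #(S.filter fun q : ℕ => (q : ℤ) ∣ n) ^ k =
      #{g ∈ Fintype.piFinset fun _ : Fin k => S | ((univ.lcm g : ℕ) : ℤ) ∣ n} := by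
  rw [← Fintype.card_piFinset_const]
  congr 1
  ext g
  simp [Int.natCast_dvd, Finset.lcm_dvd_iff, forall_and]

theorem lcm_mem_Icc_of_mem_piFinset {k N : ℕ} {g : Fin k → ℕ}
    (hg : g ∈ Fintype.piFinset fun _ => Icc 1 N) : univ.lcm g ∈ Icc 1 (N ^ k) := by
  simp only [Fintype.mem_piFinset, mem_Icc] at hg
  have hdvd : univ.lcm g ∣ ∏ i, g i := lcm_dvd fun i _ => dvd_prod_of_mem g (mem_univ i)
  have hprod : 0 < ∏ i, g i := prod_pos fun i _ => (hg i).1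
  refine mem_Icc.2 ⟨Nat.pos_of_dvd_of_pos hdvd hprod, (Nat.le_of_dvd hprod hdvd).trans ?_⟩
  simpa using prod_le_pow_card univ g N fun i _ => (hg i).2

theorem card_filter_lcm_eq_le {k L : ℕ} (hL : L ≠ 0) (P : Finset (Fin k → ℕ)) :
    #{g ∈ P | univ.lcm g = L} ≤ #L.divisors ^ k := by
  rw [← Fintype.card_piFinset_const]
  refine card_le_card fun g hg => Fintype.mem_piFinset.2 fun i => ?_
  rw [Nat.mem_divisors]
  exact ⟨(mem_filter.1 hg).2 ▸ dvd_lcm (mem_univ i), hL⟩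

theorem sum_inv_lcm_le {k N : ℕ} {δ C : ℝ} (hδ : 0 < k * δ) (hδ1 : k * δ ≤ 1)
    (hC : ∀ n : ℕ, n ≠ 0 → (#n.divisors : ℝ) ≤ C * (n : ℝ) ^ δ) :
    ∑ g ∈ Fintype.piFinset (fun _ : Fin k => Icc 1 N), ((univ.lcm g : ℕ) : ℝ)⁻¹ ≤
      C ^ k * ((N : ℝ) ^ k) ^ (k * δ) / (k * δ) := by
  rw [← sum_fiberwise_of_maps_to fun g hg => lcm_mem_Icc_of_mem_piFinset hg]
  have hfiber : ∀ L ∈ Icc 1 (N ^ k),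
      ∑ g ∈ Fintype.piFinset (fun _ : Fin k => Icc 1 N) with univ.lcm g = L,
        ((univ.lcm g : ℕ) : ℝ)⁻¹ ≤ C ^ k * (L : ℝ) ^ (k * δ - 1) := by
    intro L hL
    have hL0 : 0 < L := (mem_Icc.1 hL).1
    have hLR : (0 : ℝ) < L := by exact_mod_cast hL0
    rw [sum_congr rfl fun g hg => by rw [(mem_filter.1 hg).2], sum_const, nsmul_eq_mul,
      Real.rpow_sub hLR, Real.rpow_one, ← mul_div_assoc, div_eq_mul_inv]
    gcongr
    calc (#{g ∈ Fintype.piFinset (fun _ : Fin k => Icc 1 N) | univ.lcm g = L} : ℝ)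
        ≤ (#L.divisors : ℝ) ^ k := by exact_mod_cast card_filter_lcm_eq_le hL0.ne' _
      _ ≤ (C * (L : ℝ) ^ δ) ^ k := by gcongr; exact hC L hL0.ne'
      _ = C ^ k * (L : ℝ) ^ (k * δ) := by
          rw [mul_pow, ← Real.rpow_mul_natCast hLR.le, mul_comm δ]
  calc _ ≤ ∑ L ∈ Icc 1 (N ^ k), C ^ k * (L : ℝ) ^ (k * δ - 1) := sum_le_sum hfiber
    _ ≤ C ^ k * (((N ^ k : ℕ) : ℝ) ^ (k * δ) / (k * δ)) := by
        rw [← mul_sum]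
        gcongr
        · have hC1 : 1 ≤ C := by simpa using hC 1 one_ne_zero
          exact pow_nonneg (zero_le_one.trans hC1) k
        exact sum_Icc_rpow_sub_one_le hδ hδ1 _
    _ = C ^ k * ((N : ℝ) ^ k) ^ (k * δ) / (k * δ) := by push_cast; ring

theorem sum_card_filter_dvd_pow_le (N k : ℕ) {a b : ℤ} (hab : a ≤ b) :
    ∑ n ∈ Icc a b, (#((Icc 1 N).filter fun q : ℕ => (q : ℤ) ∣ n) : ℝ) ^ k ≤
      (b - a + 1) * ∑ g ∈ Fintype.piFinset (fun _ : Fin k => Icc 1 N), ((univ.lcm g : ℕ) : ℝ)⁻¹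
        + (N : ℝ) ^ k := by
  calc ∑ n ∈ Icc a b, (#((Icc 1 N).filter fun q : ℕ => (q : ℤ) ∣ n) : ℝ) ^ k
      = ∑ g ∈ Fintype.piFinset (fun _ : Fin k => Icc 1 N),
          (#{n ∈ Icc a b | ((univ.lcm g : ℕ) : ℤ) ∣ n} : ℝ) := by
        simp_rw [← Nat.cast_pow, card_filter_dvd_pow, card_filter, Nat.cast_sum]
        exact sum_comm
    _ ≤ ∑ g ∈ Fintype.piFinset (fun _ : Fin k => Icc 1 N),
          ((b - a + 1) * ((univ.lcm g : ℕ) : ℝ)⁻¹ + 1) := by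
        refine sum_le_sum fun g hg => ?_
        have hL := (mem_Icc.1 (lcm_mem_Icc_of_mem_piFinset hg)).1
        have := Int.card_filter_dvd_Icc_le (r := (univ.lcm g : ℕ)) (by exact_mod_cast hL) hab
        rwa [Int.cast_natCast, div_eq_mul_inv] at this
    _ = _ := by simp [sum_add_distrib, mul_sum]

/-- there is an absolute `C > 0` such that for every integer `N ≥ 1` and
every real `Q ≥ N^10`,
`(1/Q) ∑_{|n| ≤ Q} (#{1 ≤ q ≤ N : q ∣ n})^10 ≤ C N^{3/4}`. -/
theorem statement13 : ∃ C : ℝ, 0 < C ∧ ∀ N : ℕ, 1 ≤ N → ∀ Q : ℝ, (N : ℝ) ^ 10 ≤ Q →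
    (1 / Q) * ∑ n ∈ Finset.Icc (-(⌊Q⌋₊ : ℤ)) (⌊Q⌋₊ : ℤ),
        ((((Finset.Icc 1 N).filter (fun q : ℕ => (q : ℤ) ∣ n)).card : ℝ)) ^ 10 ≤
      C * (N : ℝ) ^ ((3 : ℝ) / 4) := by
  -- `δ = 3/400` is chosen so that the exponent `10 * 10 * δ` in `sum_inv_lcm_le` is `3/4`.
  obtain ⟨C, hC⟩ := Nat.exists_card_divisors_le_mul_rpow (ε := 3 / 400) (by norm_num)
  refine ⟨40 * C ^ 10 + 1, by positivity, fun N hN Q hQ => ?_⟩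
  have hN1 : (1 : ℝ) ≤ N := by exact_mod_cast hN
  have hQ1 : 1 ≤ Q := (one_le_pow₀ hN1).trans hQ
  have hM : (⌊Q⌋₊ : ℝ) ≤ Q := Nat.floor_le (by linarith)
  set T := ∑ g ∈ Fintype.piFinset (fun _ : Fin 10 => Icc 1 N), ((univ.lcm g : ℕ) : ℝ)⁻¹
  have hT0 : 0 ≤ T := sum_nonneg fun _ _ => by positivity
  have hT : T ≤ 40 / 3 * C ^ 10 * (N : ℝ) ^ ((3 : ℝ) / 4) := by
    have hpow : ((N : ℝ) ^ 10) ^ ((10 : ℕ) * (3 / 400 : ℝ)) = (N : ℝ) ^ ((3 : ℝ) / 4) := by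
      rw [← Real.rpow_natCast, ← Real.rpow_mul (by positivity)]
      norm_num
    convert sum_inv_lcm_le (k := 10) (N := N) (by norm_num) (by norm_num) hC using 1
    rw [hpow]
    norm_num
    ring
  have hsum := sum_card_filter_dvd_pow_le N 10 (a := -⌊Q⌋₊) (b := ⌊Q⌋₊) (by omega)
  push_cast at hsum
  calc (1 / Q) * ∑ n ∈ Icc (-(⌊Q⌋₊ : ℤ)) ⌊Q⌋₊,
        (#((Icc 1 N).filter fun q : ℕ => (q : ℤ) ∣ n) : ℝ) ^ 10
      ≤ 3 * T + 1 := by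
        rw [one_div, inv_mul_le_iff₀ (by linarith)]
        nlinarith
    _ ≤ 40 * C ^ 10 * (N : ℝ) ^ ((3 : ℝ) / 4) + (N : ℝ) ^ ((3 : ℝ) / 4) := by
        linarith [Real.one_le_rpow hN1 (by norm_num : (0 : ℝ) ≤ 3 / 4)]
    _ = (40 * C ^ 10 + 1) * (N : ℝ) ^ ((3 : ℝ) / 4) := by ring
end
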